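/- arXiv:math/0612670 — 2 statements merged into one kernel-verified Lean document; each statement's English description precedes it below -/
import Mathlib

section
/- For k ∈ ℝ, let P_k(x, y) = y² − kxy + y − x³ + x². If k < −4 or k > 2, then P_k has no zero on the unit torus, i.e., there are no x, y ∈ ℂ with |x| = |y| = 1 and P_k(x, y) = 0. Moreover, for k = −4 and for k = 2 there do exist x, y ∈ ℂ with |x| = |y| = 1 and P_k(x, y) = 0. -/
/-!
On the unit torus `conj x = x⁻¹` and `conj y = y⁻¹`, so for real `k` a zero `(x, y)` of `P_k`
gives the second zero `(x⁻¹, y⁻¹)`. Eliminating `k` between the two equations leaves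
`(y + x) (y - x³) = 0`. On the branch `y = -x` the equation becomes `x² - (k + 2) x + 1 = 0`, and
on `y = x³` it becomes `x⁴ - k x² + 1 = 0`. A unit root `z` of `z² - c z + 1` with `c` real has
`c = z + z⁻¹ = 2 Re z`, so `|c| ≤ 2`; hence `k ∈ [-4, 0]` or `k ∈ [-2, 2]`.
-/

open ComplexConjugate

def P (k x y : ℂ) : ℂ := y ^ 2 - k * x * y + y - x ^ 3 + x ^ 2

lemma mul_eq_zero_of_P_eq_zero_of_P_inv_eq_zero {k x y : ℂ} (hx : x ≠ 0) (hy : y ≠ 0)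
    (h : P k x y = 0) (h' : P k x⁻¹ y⁻¹ = 0) : (y + x) * (y - x ^ 3) = 0 := by
  have hcleared : x ^ 3 - k * x ^ 2 * y + x ^ 3 * y - y ^ 2 + x * y ^ 2 = 0 := by
    calc _ = x ^ 3 * y ^ 2 * P k x⁻¹ y⁻¹ := by unfold P; field_simp
      _ = 0 := by rw [h', mul_zero]
  unfold P at h
  linear_combination x * h - hcleared

lemma P_inv_eq_zero_of_norm_eq_one {k : ℝ} {x y : ℂ} (hx : ‖x‖ = 1) (hy : ‖y‖ = 1)
    (h : P k x y = 0) : P k x⁻¹ y⁻¹ = 0 := by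
  simpa [Complex.inv_eq_conj hx, Complex.inv_eq_conj hy, P] using congrArg conj h

lemma abs_le_two_of_norm_eq_one {c : ℝ} {z : ℂ} (hz : ‖z‖ = 1) (h : z ^ 2 - c * z + 1 = 0) :
    |c| ≤ 2 := by
  have hz0 : z ≠ 0 := ne_zero_of_norm_ne_zero (by simp [hz])
  have hc : (c : ℂ) = (2 * z.re : ℝ) := by
    rw [← Complex.add_conj, ← Complex.inv_eq_conj hz]
    field_simp
    linear_combination -h
  have hre : |z.re| ≤ 1 := hz ▸ Complex.abs_re_le_norm z
  rw [Complex.ofReal_inj.mp hc, abs_mul, abs_two]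
  linarith

lemma mem_Icc_of_P_eq_zero {k : ℝ} {x y : ℂ} (hx : ‖x‖ = 1) (hy : ‖y‖ = 1)
    (h : P k x y = 0) : k ∈ Set.Icc (-4) 2 := by
  have hx0 : x ≠ 0 := ne_zero_of_norm_ne_zero (by simp [hx])
  have hy0 : y ≠ 0 := ne_zero_of_norm_ne_zero (by simp [hy])
  rcases mul_eq_zero.mp (mul_eq_zero_of_P_eq_zero_of_P_inv_eq_zero hx0 hy0 h
    (P_inv_eq_zero_of_norm_eq_one hx hy h)) with hyx | hyx
  · rw [eq_neg_of_add_eq_zero_left hyx, P] at h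
    have hquad : x ^ 2 - ((k + 2 : ℝ) : ℂ) * x + 1 = 0 := by
      apply mul_left_cancel₀ (neg_ne_zero.mpr hx0)
      push_cast
      linear_combination h
    have := abs_le_two_of_norm_eq_one hx hquad
    constructor <;> linarith [abs_le.mp this]
  · rw [sub_eq_zero.mp hyx, P] at h
    have hquad : (x ^ 2) ^ 2 - k * x ^ 2 + 1 = 0 := by
      apply mul_left_cancel₀ (pow_ne_zero 2 hx0)
      linear_combination h
    have := abs_le_two_of_norm_eq_one (by rw [norm_pow, hx, one_pow]) hquad
    constructor <;> linarith [abs_le.mp this]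

/-- For real `k` with `k < −4` or `k > 2`, the polynomial
`P_k(x, y) = y² − kxy + y − x³ + x²` has no zero on the unit torus; for
`k = −4` and `k = 2` it does have a zero on the unit torus. -/
theorem Pk_torus_zeros :
    (∀ k : ℝ, k < -4 ∨ 2 < k →
      ¬ ∃ x y : ℂ, ‖x‖ = 1 ∧ ‖y‖ = 1 ∧
        y ^ 2 - (k : ℂ) * x * y + y - x ^ 3 + x ^ 2 = 0) ∧
    (∃ x y : ℂ, ‖x‖ = 1 ∧ ‖y‖ = 1 ∧
      y ^ 2 - (-4 : ℂ) * x * y + y - x ^ 3 + x ^ 2 = 0) ∧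
    (∃ x y : ℂ, ‖x‖ = 1 ∧ ‖y‖ = 1 ∧
      y ^ 2 - (2 : ℂ) * x * y + y - x ^ 3 + x ^ 2 = 0) := by
  refine ⟨?_, ⟨-1, 1, by simp, by simp, by norm_num⟩, ⟨1, 1, by simp, by simp, by norm_num⟩⟩
  rintro k hk ⟨x, y, hx, hy, h⟩
  have := mem_Icc_of_P_eq_zero hx hy h
  rcases hk with hk | hk <;> linarith [this.1, this.2]
end

section
/- Let k ∈ ℂ be such that P_k(x, y) = y² − kxy + y − x³ + x² has no zero on the unit torus. Then for every x ∈ ℂ with |x| = 1, the quadratic polynomial in y, y² + (1 − kx)y + (x² − x³), has exactly two roots y₁ and y₂ (counted with multiplicity), and they satisfy |y₁| < 1 and |y₂| > 1. -/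
/-!
Write the quadratic as `(y - y₁)(y - y₂)`. By the parallelogram law
`‖y₁‖² + ‖y₂‖² = (‖y₁ + y₂‖² + ‖(y₁ - y₂)²‖) / 2`, so `(‖y₁‖² - 1)(‖y₂‖² - 1)` is an explicit
continuous function `G` of the coefficients, hence of `x`. It is negative exactly when one root
lies inside the unit circle and the other outside, and it vanishes when a root lies on the circle,
which the hypothesis excludes for `|x| = 1`. So `G` has constant sign on the (connected) unit
circle. At a primitive sixth root of unity `x₀` the constant term `x₀² - x₀³ = x₀` has modulus
one, and then `G ≤ (‖y₁y₂‖ - 1)² = 0`; hence `G < 0` on the whole circle.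
-/

open Metric

/-- Equal to `(‖y₁‖² - 1) * (‖y₂‖² - 1)` when `y² + b y + c = (y - y₁)(y - y₂)`. -/
noncomputable def quadCircleIndex (b c : ℂ) : ℝ :=
  ‖c‖ ^ 2 + 1 - (‖b‖ ^ 2 + ‖b ^ 2 - 4 * c‖) / 2

lemma Continuous.quadCircleIndex {X : Type*} [TopologicalSpace X] {b c : X → ℂ}
    (hb : Continuous b) (hc : Continuous c) :
    Continuous fun x => quadCircleIndex (b x) (c x) := by
  unfold _root_.quadCircleIndex
  fun_prop

lemma exists_quadratic_eq_mul (b c : ℂ) :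
    ∃ y₁ y₂ : ℂ, ∀ y : ℂ, y ^ 2 + b * y + c = (y - y₁) * (y - y₂) := by
  obtain ⟨d, hd⟩ := IsAlgClosed.exists_pow_nat_eq (b ^ 2 - 4 * c) two_pos
  exact ⟨(-b + d) / 2, (-b - d) / 2, fun y => by linear_combination hd / 4⟩

section Roots

variable {b c y₁ y₂ : ℂ} (h : ∀ y : ℂ, y ^ 2 + b * y + c = (y - y₁) * (y - y₂))
include h

lemma quadCircleIndex_eq : quadCircleIndex b c = (‖y₁‖ ^ 2 - 1) * (‖y₂‖ ^ 2 - 1) := by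
  have hb : b = -(y₁ + y₂) := by linear_combination h 1 - h 0
  have hc : c = y₁ * y₂ := by linear_combination h 0
  have hdisc : b ^ 2 - 4 * c = (y₁ - y₂) ^ 2 := by rw [hb, hc]; ring
  have hpar := parallelogram_law_with_norm ℝ y₁ y₂
  rw [quadCircleIndex, hdisc, hb, hc, norm_neg, norm_pow, norm_mul]
  linear_combination (-1 / 2 : ℝ) * hpar

lemma quadratic_eq_zero_left : y₁ ^ 2 + b * y₁ + c = 0 := by
  rw [h]; ring

lemma quadratic_eq_zero_right : y₂ ^ 2 + b * y₂ + c = 0 := by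
  rw [h]; ring

end Roots

lemma quadCircleIndex_le (b c : ℂ) : quadCircleIndex b c ≤ (‖c‖ - 1) ^ 2 := by
  have h4c := norm_sub_le (b ^ 2) (b ^ 2 - 4 * c)
  rw [sub_sub_cancel, norm_mul, norm_pow] at h4c
  norm_num at h4c
  unfold quadCircleIndex
  linarith

lemma quadCircleIndex_ne_zero {b c : ℂ} (h : ∀ y : ℂ, ‖y‖ = 1 → y ^ 2 + b * y + c ≠ 0) :
    quadCircleIndex b c ≠ 0 := by
  obtain ⟨y₁, y₂, hfac⟩ := exists_quadratic_eq_mul b c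
  rw [quadCircleIndex_eq hfac, mul_ne_zero_iff, sub_ne_zero, sub_ne_zero, ne_eq, ne_eq,
    pow_eq_one_iff_of_nonneg (norm_nonneg _) two_ne_zero,
    pow_eq_one_iff_of_nonneg (norm_nonneg _) two_ne_zero]
  exact ⟨fun h₁ => h y₁ h₁ (quadratic_eq_zero_left hfac),
    fun h₂ => h y₂ h₂ (quadratic_eq_zero_right hfac)⟩

lemma exists_eq_mul_norm_lt_one_lt_norm {b c : ℂ} (h : quadCircleIndex b c < 0) :
    ∃ y₁ y₂ : ℂ, (∀ y : ℂ, y ^ 2 + b * y + c = (y - y₁) * (y - y₂)) ∧ ‖y₁‖ < 1 ∧ 1 < ‖y₂‖ := by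
  obtain ⟨y₁, y₂, hfac⟩ := exists_quadratic_eq_mul b c
  rw [quadCircleIndex_eq hfac, mul_neg_iff, sub_pos, sub_neg, sub_pos, sub_neg,
    sq_lt_one_iff₀ (norm_nonneg _), sq_lt_one_iff₀ (norm_nonneg _),
    one_lt_sq_iff₀ (norm_nonneg _), one_lt_sq_iff₀ (norm_nonneg _)] at h
  rcases h with ⟨h₁, h₂⟩ | ⟨h₁, h₂⟩
  · exact ⟨y₂, y₁, fun y => by rw [hfac]; ring, h₂, h₁⟩
  · exact ⟨y₁, y₂, hfac, h₁, h₂⟩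

lemma IsPreconnected.neg_of_ne_zero {X : Type*} [TopologicalSpace X] {s : Set X} {f : X → ℝ}
    (hs : IsPreconnected s) (hf : ContinuousOn f s) (hf0 : ∀ x ∈ s, f x ≠ 0) {a : X}
    (ha : a ∈ s) (hfa : f a < 0) {x : X} (hx : x ∈ s) : f x < 0 := by
  by_contra! hfx
  obtain ⟨z, hz, hfz⟩ := hs.intermediate_value ha hx hf ⟨hfa.le, hfx⟩
  exact hf0 z hz hfz

lemma exists_norm_eq_one_sq_sub_pow_three_eq : ∃ x : ℂ, ‖x‖ = 1 ∧ x ^ 2 - x ^ 3 = x := by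
  obtain ⟨x, _, hfac⟩ := exists_quadratic_eq_mul (-1) 1
  have hx : x ^ 2 - x + 1 = 0 := by linear_combination quadratic_eq_zero_left hfac
  have hcube : ‖x‖ ^ 3 = 1 := by
    rw [← norm_pow, show x ^ 3 = -1 by linear_combination (x + 1) * hx, norm_neg, norm_one]
  exact ⟨x, (pow_eq_one_iff_of_nonneg (norm_nonneg x) three_ne_zero).1 hcube,
    by linear_combination (-x) * hx⟩

/-- If `P_k(x, y) = y² − kxy + y − x³ + x²` has no zero on the unit torus, then
for every `x` with `|x| = 1` the monic quadratic `y² + (1 − kx)y + (x² − x³)`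
has exactly two roots (with multiplicity) `y₁, y₂`, one satisfying `|y₁| < 1`
and the other `|y₂| > 1`. -/
theorem roots_split_by_unit_circle (k : ℂ)
    (hk : ¬ ∃ x y : ℂ, ‖x‖ = 1 ∧ ‖y‖ = 1 ∧
      y ^ 2 - k * x * y + y - x ^ 3 + x ^ 2 = 0) :
    ∀ x : ℂ, ‖x‖ = 1 →
      ∃ y₁ y₂ : ℂ,
        (∀ y : ℂ, y ^ 2 + (1 - k * x) * y + (x ^ 2 - x ^ 3) =
          (y - y₁) * (y - y₂)) ∧
        ‖y₁‖ < 1 ∧ 1 < ‖y₂‖ := by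
  set G : ℂ → ℝ := fun x => quadCircleIndex (1 - k * x) (x ^ 2 - x ^ 3)
  have hG : Continuous G := Continuous.quadCircleIndex (by fun_prop) (by fun_prop)
  have hS : IsPreconnected (sphere (0 : ℂ) 1) :=
    (isConnected_sphere (Complex.rank_real_complex ▸ Nat.one_lt_ofNat) 0
      zero_le_one).isPreconnected
  have hG0 : ∀ x ∈ sphere (0 : ℂ) 1, G x ≠ 0 := fun x hx =>
    quadCircleIndex_ne_zero fun y hy hroot =>
      hk ⟨x, y, mem_sphere_zero_iff_norm.1 hx, hy, by linear_combination hroot⟩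
  obtain ⟨x₀, hx₀, hc₀⟩ := exists_norm_eq_one_sq_sub_pow_three_eq
  have hx₀S : x₀ ∈ sphere (0 : ℂ) 1 := mem_sphere_zero_iff_norm.2 hx₀
  have hGx₀ : G x₀ < 0 :=
    ((quadCircleIndex_le _ _).trans_eq (by rw [hc₀, hx₀]; norm_num)).lt_of_ne (hG0 x₀ hx₀S)
  intro x hx
  exact exists_eq_mul_norm_lt_one_lt_norm
    (hS.neg_of_ne_zero hG.continuousOn hG0 hx₀S hGx₀ (mem_sphere_zero_iff_norm.2 hx))
end
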